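/- arXiv:2211.09062 — 5 statements merged into one kernel-verified Lean document; each statement's English description precedes it below -/
import Mathlib

section
/- Consider the SIR⁽²⁾S model without vaccination. A stationary state (s̄, ī, r̄₀, r̄₁) with ī > 0 (an endemic equilibrium) exists if and only if R₀ > 1, and when R₀ > 1 this endemic equilibrium is unique. -/
/-- A state of the SIR⁽²⁾S model (without vaccination): nonnegative entries summing to 1,
satisfying the stationarity equations. -/
def IsStationarySIR2S (β γ μ c₁ c₂ s i r₀ r₁ : ℝ) : Prop :=
  0 ≤ s ∧ 0 ≤ i ∧ 0 ≤ r₀ ∧ 0 ≤ r₁ ∧ s + i + r₀ + r₁ = 1 ∧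
  μ - β * s * i + c₂ * r₁ - μ * s = 0 ∧
  β * s * i + (β / 2) * r₁ * i - (γ + μ) * i = 0 ∧
  γ * i - (c₁ + μ) * r₀ = 0 ∧
  c₁ * r₀ - (β / 2) * r₁ * i - (c₂ + μ) * r₁ = 0

lemma quad_pos_root_unique {a b c x y : ℝ} (ha : 0 < a) (hc : c < 0)
    (hx : a*x^2+b*x+c = 0) (hy : a*y^2+b*y+c = 0) (hx0 : 0 < x) (hy0 : 0 < y) : x = y := by
  rcases mul_eq_zero.1 (show (x-y)*(a*(x+y)+b) = 0 by linear_combination hx - hy) with h|h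
  · linarith [sub_eq_zero.1 h]
  · exfalso
    have hcxy : c = a*x*y := by linear_combination hx - x*h
    nlinarith [mul_pos (mul_pos ha hx0) hy0]

lemma quad_pos_root_exists {a b c : ℝ} (ha : 0 < a) (hc : c < 0) :
    ∃ x : ℝ, 0 < x ∧ a*x^2+b*x+c = 0 := by
  have hd0 : 0 ≤ b^2 - 4*a*c := by nlinarith
  have hd : b^2 < b^2 - 4*a*c := by nlinarith
  have hsq : Real.sqrt (b^2 - 4*a*c) ^ 2 = b^2 - 4*a*c := Real.sq_sqrt hd0
  have hbs : b < Real.sqrt (b^2 - 4*a*c) := by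
    have h1 : |b| < Real.sqrt (b^2 - 4*a*c) := by
      rw [← Real.sqrt_sq_eq_abs]
      exact Real.sqrt_lt_sqrt (sq_nonneg b) hd
    exact lt_of_le_of_lt (le_abs_self b) h1
  refine ⟨(-b + Real.sqrt (b^2 - 4*a*c))/(2*a), div_pos (by linarith) (by linarith), ?_⟩
  field_simp
  rw [show b^2 - a*4*c = b^2 - 4*a*c by ring]
  linear_combination hsq

lemma sir2s_quad {β γ μ c₁ c₂ s i r₀ r₁ : ℝ}
    (hst : IsStationarySIR2S β γ μ c₁ c₂ s i r₀ r₁) (hi : 0 < i) :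
    β^2*(c₁+μ+γ)*i^2
      + β*((γ+μ)*(c₁+μ) + 2*(c₁+μ+γ)*(c₂+μ) + c₁*γ - β*(c₁+μ))*i
      + 2*(c₂+μ)*(c₁+μ)*((γ+μ)-β) = 0 := by
  obtain ⟨hs, hi0, hr0, hr1, hsum, h1, h2, h3, h4⟩ := hst
  have h2' : β*s + β/2*r₁ - (γ+μ) = 0 := by
    have hz : (β*s + β/2*r₁ - (γ+μ))*i = 0 := by linear_combination h2
    exact (mul_eq_zero.1 hz).resolve_right hi.ne'
  linear_combination ((c₁+μ)*β)*h4 + (c₁*β + (β*i+2*(c₂+μ))*β)*h3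
    - (β*i+2*(c₂+μ))*(c₁+μ)*h2' + (β*i+2*(c₂+μ))*(c₁+μ)*β*hsum

lemma sir2s_unique {β γ μ c₁ c₂ : ℝ} (hβ : 0 < β) (hγ : 0 < γ) (hμ : 0 < μ)
    (hc₁ : 0 < c₁) (hc₂ : 0 < c₂) (hR : γ + μ < β)
    {s i r₀ r₁ s' i' r₀' r₁' : ℝ}
    (h : IsStationarySIR2S β γ μ c₁ c₂ s i r₀ r₁) (hi : 0 < i)
    (h' : IsStationarySIR2S β γ μ c₁ c₂ s' i' r₀' r₁') (hi' : 0 < i') :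
    s = s' ∧ i = i' ∧ r₀ = r₀' ∧ r₁ = r₁' := by
  have ha : (0:ℝ) < β^2*(c₁+μ+γ) := by positivity
  have hc : 2*(c₂+μ)*(c₁+μ)*((γ+μ)-β) < 0 := by
    have h1 : (γ+μ)-β < 0 := by linarith
    have h2 : (0:ℝ) < 2*(c₂+μ)*(c₁+μ) := by positivity
    nlinarith
  have hii : i = i' :=
    quad_pos_root_unique ha hc (sir2s_quad h hi) (sir2s_quad h' hi') hi hi'
  subst hii
  obtain ⟨_, _, _, _, hsum, _, _, h3, h4⟩ := h
  obtain ⟨_, _, _, _, hsum', _, _, h3', h4'⟩ := h'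
  have hE : (0:ℝ) < c₁+μ := by linarith
  have hr0 : r₀ = r₀' := by
    have : (c₁+μ)*r₀ = (c₁+μ)*r₀' := by linarith
    exact mul_left_cancel₀ hE.ne' this
  subst hr0
  have hden : (0:ℝ) < (β/2)*i + (c₂+μ) := by positivity
  have hr1 : r₁ = r₁' := by
    have hz : ((β/2)*i + (c₂+μ))*r₁ = ((β/2)*i + (c₂+μ))*r₁' := by
      linear_combination h4' - h4
    exact mul_left_cancel₀ hden.ne' hz
  subst hr1
  exact ⟨by linarith, rfl, rfl, rfl⟩

/-- The SIR⁽²⁾S model without vaccination has an endemic equilibrium (a stationary state with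
ī > 0) iff R₀ = β/(γ+μ) > 1, and when R₀ > 1 this endemic equilibrium is unique. -/
theorem sir2s_endemic_equilibrium_iff_and_unique
    (β γ μ c₁ c₂ : ℝ) (hβ : 0 < β) (hγ : 0 < γ) (hμ : 0 < μ)
    (hc₁ : 0 < c₁) (hc₂ : 0 < c₂) :
    ((∃ s i r₀ r₁ : ℝ, IsStationarySIR2S β γ μ c₁ c₂ s i r₀ r₁ ∧ 0 < i) ↔
      1 < β / (γ + μ)) ∧
    (1 < β / (γ + μ) →
      ∃! p : ℝ × ℝ × ℝ × ℝ,
        IsStationarySIR2S β γ μ c₁ c₂ p.1 p.2.1 p.2.2.1 p.2.2.2 ∧ 0 < p.2.1) := by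
  have hD : (0:ℝ) < γ + μ := by linarith
  -- forward direction of the iff
  have fwd : (∃ s i r₀ r₁ : ℝ, IsStationarySIR2S β γ μ c₁ c₂ s i r₀ r₁ ∧ 0 < i) →
      1 < β / (γ + μ) := by
    rintro ⟨s, i, r₀, r₁, ⟨hs, hi0, hr0, hr1, hsum, h1, h2, h3, h4⟩, hi⟩
    have h2' : β*s + β/2*r₁ - (γ+μ) = 0 := by
      have hz : (β*s + β/2*r₁ - (γ+μ))*i = 0 := by linear_combination h2
      exact (mul_eq_zero.1 hz).resolve_right hi.ne'
    rw [lt_div_iff₀ hD]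
    nlinarith [mul_pos hβ hi, mul_nonneg hβ.le hr0, mul_nonneg hβ.le hr1]
  -- existence under R₀ > 1
  have exi : 1 < β / (γ + μ) →
      ∃ s i r₀ r₁ : ℝ, IsStationarySIR2S β γ μ c₁ c₂ s i r₀ r₁ ∧ 0 < i := by
    intro hR
    have hβD : γ + μ < β := by
      have := (one_lt_div hD).1 hR; linarith
    have ha : (0:ℝ) < β^2*(c₁+μ+γ) := by positivity
    have hc : 2*(c₂+μ)*(c₁+μ)*((γ+μ)-β) < 0 := by
      have h1 : (γ+μ)-β < 0 := by linarith
      have h2 : (0:ℝ) < 2*(c₂+μ)*(c₁+μ) := by positivity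
      nlinarith
    obtain ⟨i, hi, hQ⟩ := quad_pos_root_exists
      (b := β*((γ+μ)*(c₁+μ) + 2*(c₁+μ+γ)*(c₂+μ) + c₁*γ - β*(c₁+μ))) ha hc
    obtain ⟨r₀, hr₀_def⟩ : ∃ r₀ : ℝ, r₀ = γ*i/(c₁+μ) := ⟨_, rfl⟩
    obtain ⟨r₁, hr₁_def⟩ : ∃ r₁ : ℝ, r₁ = 2*c₁*γ*i/((c₁+μ)*(β*i+2*(c₂+μ))) := ⟨_, rfl⟩
    obtain ⟨s, hs_def⟩ : ∃ s : ℝ, s = (γ+μ)/β - r₁/2 := ⟨_, rfl⟩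
    have hE : (0:ℝ) < c₁+μ := by linarith
    have hden : (0:ℝ) < (c₁+μ)*(β*i+2*(c₂+μ)) := by positivity
    have hr₀pos : 0 ≤ r₀ := by rw [hr₀_def]; positivity
    have hr₁pos : 0 ≤ r₁ := by rw [hr₁_def]; positivity
    have hβs : β*s = (γ+μ) - β*r₁/2 := by
      rw [hs_def]; field_simp
    have hEr₀ : (c₁+μ)*r₀ = γ*i := by
      rw [hr₀_def]; field_simp
    have hr₁den : (c₁+μ)*(β*i+2*(c₂+μ))*r₁ = 2*c₁*γ*i := by
      rw [hr₁_def]; field_simp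
    have hβr₁ : β*r₁ < 2*(γ+μ) := by
      have h5 : (c₁+μ)*(β*i+2*(c₂+μ))*(2*(γ+μ) - β*r₁)
          = 2*(β*i*((γ+μ)*(c₁+μ) - c₁*γ) + 2*(γ+μ)*(c₁+μ)*(c₂+μ)) := by
        linear_combination -β*hr₁den
      have hr : (0:ℝ) < 2*(β*i*((γ+μ)*(c₁+μ) - c₁*γ) + 2*(γ+μ)*(c₁+μ)*(c₂+μ)) := by
        have key : (0:ℝ) < (γ+μ)*(c₁+μ) - c₁*γ := by nlinarith
        have h6 : (0:ℝ) < (β*i)*((γ+μ)*(c₁+μ) - c₁*γ) := mul_pos (mul_pos hβ hi) key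
        have h7 : (0:ℝ) < (γ+μ)*(c₁+μ)*(c₂+μ) := by positivity
        linarith
      by_contra hcon
      push_neg at hcon
      have h8 : (0:ℝ) ≤ ((c₁+μ)*(β*i+2*(c₂+μ)))*(β*r₁ - 2*(γ+μ)) :=
        mul_nonneg hden.le (by linarith)
      linarith
    have hs_nonneg : 0 ≤ s := by
      rw [hs_def]
      have h7 : r₁/2 ≤ (γ+μ)/β := by
        rw [div_le_div_iff₀ two_pos hβ]; linarith
      linarith
    have heq2 : β * s * i + (β / 2) * r₁ * i - (γ + μ) * i = 0 := by
      linear_combination i*hβs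
    have heq3 : γ * i - (c₁ + μ) * r₀ = 0 := by linear_combination -hEr₀
    have heq4 : c₁ * r₀ - (β / 2) * r₁ * i - (c₂ + μ) * r₁ = 0 := by
      have h8 : (c₁+μ)*(c₁ * r₀ - (β / 2) * r₁ * i - (c₂ + μ) * r₁) = 0 := by
        linear_combination c₁*hEr₀ - (1/2)*hr₁den
      exact (mul_eq_zero.1 h8).resolve_left hE.ne'
    have hsum : s + i + r₀ + r₁ = 1 := by
      have hM : (β*((c₁+μ)*(β*i+2*(c₂+μ)))) ≠ 0 := by positivity
      have hmain : β*((c₁+μ)*(β*i+2*(c₂+μ)))*(s+i+r₀+r₁)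
          = β*((c₁+μ)*(β*i+2*(c₂+μ)))*1 := by
        linear_combination ((c₁+μ)*(β*i+2*(c₂+μ)))*hβs + (β*(β*i+2*(c₂+μ)))*hEr₀
          + (β/2)*hr₁den + hQ
      exact mul_left_cancel₀ hM hmain
    have heq1 : μ - β * s * i + c₂ * r₁ - μ * s = 0 := by
      linear_combination -heq2 - heq3 - heq4 - μ*hsum
    exact ⟨s, i, r₀, r₁,
      ⟨hs_nonneg, hi.le, hr₀pos, hr₁pos, hsum, heq1, heq2, heq3, heq4⟩, hi⟩
  refine ⟨⟨fwd, fun hR => exi hR⟩, fun hR => ?_⟩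
  obtain ⟨s, i, r₀, r₁, h, hi⟩ := exi hR
  have hβD : γ + μ < β := by
    have := (one_lt_div hD).1 hR; linarith
  refine ⟨(s, i, r₀, r₁), ⟨h, hi⟩, ?_⟩
  rintro ⟨s', i', r₀', r₁'⟩ ⟨h', hi'⟩
  obtain ⟨e1, e2, e3, e4⟩ := sir2s_unique hβ hγ hμ hc₁ hc₂ hβD h' hi' h hi
  simp only [Prod.mk.injEq]
  exact ⟨e1, e2, e3, e4⟩
end

section
/- Consider the classic SIRS model with vaccination of susceptibles at constant rate η ≥ 0. Then: (a) the unique stationary state with i = 0 is (ŝ, 0, r̂) with ŝ = (ω+μ)/(ω+μ+η) and r̂ = η/(ω+μ+η); (b) a stationary state with i > 0 exists if and only if R₀·ŝ > 1, equivalently if and only if η < (ω+μ)·(R₀−1); (c) if R₀ > 1 then the critical vaccination rate η_c = (ω+μ)·(R₀−1) satisfies R₀·(ω+μ)/(ω+μ+η_c) = 1, and the corresponding vaccine supply is η_c·(ω+μ)/(ω+μ+η_c) = (ω+μ)·(1 − 1/R₀). -/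
/-- A stationary state of the classic SIRS model with vaccination of susceptibles at rate η:
nonnegative entries summing to 1, satisfying the stationarity equations. -/
def IsStationarySIRSVac (β γ μ ω η s i r : ℝ) : Prop :=
  0 ≤ s ∧ 0 ≤ i ∧ 0 ≤ r ∧ s + i + r = 1 ∧
  μ - β * s * i + ω * r - μ * s - η * s = 0 ∧
  β * s * i - (γ + μ) * i = 0 ∧
  η * s + γ * i - (ω + μ) * r = 0

/-- For the classic SIRS model with vaccination at rate η ≥ 0:
(a) the unique stationary state with i = 0 is (ŝ, 0, r̂) with ŝ = (ω+μ)/(ω+μ+η) and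
    r̂ = η/(ω+μ+η);
(b) a stationary state with i > 0 exists iff R₀·ŝ > 1, equivalently iff
    η < (ω+μ)(R₀−1);
(c) if R₀ > 1 then η_c = (ω+μ)(R₀−1) satisfies R₀·(ω+μ)/(ω+μ+η_c) = 1 and
    η_c·(ω+μ)/(ω+μ+η_c) = (ω+μ)(1 − 1/R₀). -/
theorem sirs_vac_equilibria_and_critical_rate
    (β γ μ ω η : ℝ) (hβ : 0 < β) (hγ : 0 < γ) (hμ : 0 < μ) (hω : 0 < ω) (hη : 0 ≤ η) :
    (IsStationarySIRSVac β γ μ ω η ((ω + μ) / (ω + μ + η)) 0 (η / (ω + μ + η)) ∧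
      ∀ s i r : ℝ, IsStationarySIRSVac β γ μ ω η s i r → i = 0 →
        s = (ω + μ) / (ω + μ + η) ∧ r = η / (ω + μ + η)) ∧
    ((∃ s i r : ℝ, IsStationarySIRSVac β γ μ ω η s i r ∧ 0 < i) ↔
      1 < β / (γ + μ) * ((ω + μ) / (ω + μ + η))) ∧
    ((∃ s i r : ℝ, IsStationarySIRSVac β γ μ ω η s i r ∧ 0 < i) ↔
      η < (ω + μ) * (β / (γ + μ) - 1)) ∧
    (1 < β / (γ + μ) →
      β / (γ + μ) * ((ω + μ) / (ω + μ + (ω + μ) * (β / (γ + μ) - 1))) = 1 ∧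
      (ω + μ) * (β / (γ + μ) - 1) * ((ω + μ) / (ω + μ + (ω + μ) * (β / (γ + μ) - 1))) =
        (ω + μ) * (1 - 1 / (β / (γ + μ)))) := by
  have hgm : (0:ℝ) < γ + μ := by linarith
  have hom : (0:ℝ) < ω + μ := by linarith
  have hd : (0:ℝ) < ω + μ + η := by linarith
  -- main equivalence helper
  have hmain : (∃ s i r : ℝ, IsStationarySIRSVac β γ μ ω η s i r ∧ 0 < i) ↔
      1 < β / (γ + μ) * ((ω + μ) / (ω + μ + η)) := by
    constructor
    · rintro ⟨s, i, r, ⟨hs, hi, hr, hsum, h1, h2, h3⟩, hip⟩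
      have hβs : β * s = γ + μ := by
        have h2' : (β * s - (γ + μ)) * i = 0 := by linear_combination h2
        rcases mul_eq_zero.mp h2' with h | h
        · linarith
        · exact absurd h hip.ne'
      have hrel : i * (ω + μ + γ) = (ω + μ) - s * (ω + μ + η) := by
        linear_combination (ω + μ) * hsum + h3
      rw [div_mul_div_comm, lt_div_iff₀ (by positivity)]
      nlinarith [mul_pos hip (show (0:ℝ) < ω + μ + γ by linarith), hβs, hrel]
    · intro h
      have hkey : (γ + μ) * (ω + μ + η) < β * (ω + μ) := by
        rw [div_mul_div_comm, lt_div_iff₀ (by positivity)] at h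
        linarith
      refine ⟨(γ + μ) / β, ((ω + μ) - ((γ + μ) / β) * (ω + μ + η)) / (ω + μ + γ),
        (η * ((γ + μ) / β) + γ * (((ω + μ) - ((γ + μ) / β) * (ω + μ + η)) / (ω + μ + γ))) / (ω + μ),
        ⟨?_, ?_, ?_, ?_, ?_, ?_, ?_⟩, ?_⟩
      · positivity
      · apply div_nonneg _ (by linarith)
        rw [sub_nonneg, div_mul_eq_mul_div, div_le_iff₀ hβ]
        nlinarith
      · apply div_nonneg _ hom.le
        have hinn : (0:ℝ) ≤ ((ω + μ) - ((γ + μ) / β) * (ω + μ + η)) / (ω + μ + γ) := by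
          apply div_nonneg _ (by linarith)
          rw [sub_nonneg, div_mul_eq_mul_div, div_le_iff₀ hβ]
          nlinarith
        positivity
      · field_simp
        ring
      · field_simp
        ring
      · field_simp
        ring
      · field_simp
        ring
      · apply div_pos _ (by linarith)
        rw [sub_pos, div_mul_eq_mul_div, div_lt_iff₀ hβ]
        nlinarith
  refine ⟨⟨⟨by positivity, le_refl 0, by positivity, by field_simp; ring, ?_, by ring, ?_⟩, ?_⟩,
    hmain, ?_, ?_⟩
  · field_simp
    ring
  · field_simp
    ring
  · rintro s i r ⟨hs, hi, hr, hsum, h1, h2, h3⟩ hi0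
    subst hi0
    constructor
    · rw [eq_div_iff hd.ne']
      linear_combination (ω + μ) * hsum + h3
    · rw [eq_div_iff hd.ne']
      linear_combination η * hsum - h3
  · rw [hmain]
    constructor
    · intro h
      have hkey : (γ + μ) * (ω + μ + η) < β * (ω + μ) := by
        rw [div_mul_div_comm, lt_div_iff₀ (by positivity)] at h
        linarith
      rw [show β / (γ + μ) - 1 = (β - (γ + μ)) / (γ + μ) by field_simp,
        mul_div_assoc', lt_div_iff₀ hgm]
      nlinarith
    · intro h
      have hkey : η * (γ + μ) < (ω + μ) * (β - (γ + μ)) := by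
        rw [show β / (γ + μ) - 1 = (β - (γ + μ)) / (γ + μ) by field_simp,
          mul_div_assoc', lt_div_iff₀ hgm] at h
        linarith
      rw [div_mul_div_comm, lt_div_iff₀ (by positivity)]
      nlinarith
  · intro hR0
    have hD : ω + μ + (ω + μ) * (β / (γ + μ) - 1) = (ω + μ) * β / (γ + μ) := by
      field_simp
      ring
    have hβgm : γ + μ < β := by
      rw [lt_div_iff₀ hgm] at hR0
      linarith
    constructor
    · rw [hD]
      field_simp
    · rw [hD]
      field_simp
end

section
/- Fix an integer k ≥ 2 and ω > 0, set L_j = ln(1 − j·(k−1)/k²) for 0 ≤ j ≤ k−1 (which is well defined since j·(k−1)/k² < 1), and define c_k(j) = ω/(L_{j−1} − L_j) for 1 ≤ j ≤ k−1 (the rates fitting an exponential decay of immunity). Then c_k(j) > 0 for every 1 ≤ j ≤ k−1, the partial cumulative immunity satisfies ∑_{j=1}^{k−1} (1 − (j−1)/k)·(1/c_k(j)) < 1/ω, and consequently there is a unique c_k(k) > 0 completing the family so that the cumulative immunity condition ∑_{j=0}^{k−1} (1/c_k(j+1))·(1 − j/k) = 1/ω holds, namely c_k(k) = (1/k)/(1/ω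 − ∑_{j=1}^{k−1} (1 − (j−1)/k)·(1/c_k(j))). -/
/-- For k ≥ 2 and ω > 0, with L_j = ln(1 − j(k−1)/k²) and c_k(j) = ω/(L_{j−1} − L_j)
for 1 ≤ j ≤ k−1 (the rates fitting exponential decay of immunity): the rates are
positive, the partial cumulative immunity ∑_{j=1}^{k−1} (1 − (j−1)/k)/c_k(j) is
strictly smaller than 1/ω, and there is a unique c_k(k) > 0 completing the family so
that the cumulative immunity condition holds, namely
c_k(k) = (1/k)/(1/ω − ∑_{j=1}^{k−1} (1 − (j−1)/k)/c_k(j)). -/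
theorem exponential_rates_cumulative_immunity
    (k : ℕ) (hk : 2 ≤ k) (ω : ℝ) (hω : 0 < ω)
    (L : ℕ → ℝ)
    (hL : ∀ j ≤ k - 1, L j = Real.log (1 - (j : ℝ) * ((k : ℝ) - 1) / (k : ℝ) ^ 2))
    (c : ℕ → ℝ)
    (hc : ∀ j, 1 ≤ j → j ≤ k - 1 → c j = ω / (L (j - 1) - L j))
    (S ck : ℝ)
    (hS : S = ∑ j ∈ Finset.Icc 1 (k - 1), (1 - ((j : ℝ) - 1) / (k : ℝ)) * (1 / c j))
    (hck : ck = (1 / (k : ℝ)) / (1 / ω - S)) :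
    (∀ j, 1 ≤ j → j ≤ k - 1 → 0 < c j) ∧
    S < 1 / ω ∧
    0 < ck ∧
    (∑ j ∈ Finset.range k,
        (1 / (if j + 1 = k then ck else c (j + 1))) * (1 - (j : ℝ) / (k : ℝ)) = 1 / ω) ∧
    (∀ x : ℝ, 0 < x →
      (∑ j ∈ Finset.range k,
        (1 / (if j + 1 = k then x else c (j + 1))) * (1 - (j : ℝ) / (k : ℝ)) = 1 / ω) →
      x = ck) := by
  have hk1 : 1 ≤ k := le_trans (by norm_num) hk
  set K : ℝ := (k : ℝ) with hKdef
  have hK2 : (2 : ℝ) ≤ K := by rw [hKdef]; exact_mod_cast hk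
  have hK0 : 0 < K := by linarith
  set D : ℕ → ℝ := fun j => K ^ 2 - (j : ℝ) * (K - 1) with hD
  have hcast : ((k - 1 : ℕ) : ℝ) = K - 1 := by
    rw [Nat.cast_sub hk1]; norm_num; exact hKdef.symm
  have hDpos : ∀ j ≤ k - 1, 0 < D j := by
    intro j hj
    have hj' : (j : ℝ) ≤ K - 1 := by
      have := (Nat.cast_le (α := ℝ)).mpr hj; rw [hcast] at this; exact this
    have hj0 : (0 : ℝ) ≤ (j : ℝ) := Nat.cast_nonneg j
    simp only [hD]; nlinarith
  -- difference of L's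
  have hjm1 : ∀ j : ℕ, 1 ≤ j → ((j - 1 : ℕ) : ℝ) = (j : ℝ) - 1 := by
    intro j hj; rw [Nat.cast_sub hj]; norm_num
  have hDdiff : ∀ j : ℕ, 1 ≤ j → D (j - 1) = D j + (K - 1) := by
    intro j hj; simp only [hD]; rw [hjm1 j hj]; ring
  have hLdiff : ∀ j : ℕ, 1 ≤ j → j ≤ k - 1 →
      L (j - 1) - L j = Real.log (D (j - 1)) - Real.log (D j) := by
    intro j hj1 hj2
    have hj2' : j - 1 ≤ k - 1 := le_trans (Nat.sub_le j 1) hj2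
    have e1 : (1 : ℝ) - ((j - 1 : ℕ) : ℝ) * (K - 1) / K ^ 2 = D (j - 1) / K ^ 2 := by
      simp only [hD]; field_simp
    have e2 : (1 : ℝ) - (j : ℝ) * (K - 1) / K ^ 2 = D j / K ^ 2 := by
      simp only [hD]; field_simp
    rw [hL _ hj2', hL _ hj2, e1, e2,
      Real.log_div (ne_of_gt (hDpos _ hj2')) (pow_ne_zero 2 (ne_of_gt hK0)),
      Real.log_div (ne_of_gt (hDpos _ hj2)) (pow_ne_zero 2 (ne_of_gt hK0))]
    ring
  have hLdpos : ∀ j : ℕ, 1 ≤ j → j ≤ k - 1 → 0 < L (j - 1) - L j := by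
    intro j hj1 hj2
    rw [hLdiff j hj1 hj2]
    have := hDpos j hj2
    have h2 : D j < D (j - 1) := by rw [hDdiff j hj1]; linarith
    have := Real.log_lt_log (hDpos j hj2) h2
    linarith
  have hcpos : ∀ j, 1 ≤ j → j ≤ k - 1 → 0 < c j := by
    intro j hj1 hj2
    rw [hc j hj1 hj2]
    exact div_pos hω (hLdpos j hj1 hj2)
  -- term bound
  have hterm : ∀ j ∈ Finset.Icc 1 (k - 1),
      (1 - ((j : ℝ) - 1) / K) * (1 / c j) < 1 / (K * ω) := by
    intro j hj
    rw [Finset.mem_Icc] at hj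
    obtain ⟨hj1, hj2⟩ := hj
    have hDj := hDpos j hj2
    have hLd := hLdpos j hj1 hj2
    have hcj : 1 / c j = (L (j - 1) - L j) / ω := by
      rw [hc j hj1 hj2, one_div_div]
    have hlog : L (j - 1) - L j ≤ (K - 1) / D j := by
      rw [hLdiff j hj1 hj2, ← Real.log_div
        (ne_of_gt (hDpos _ (le_trans (Nat.sub_le j 1) hj2))) (ne_of_gt hDj)]
      have h1 : 0 < D (j - 1) / D j :=
        div_pos (by rw [hDdiff j hj1]; linarith) hDj
      have h2 := Real.log_le_sub_one_of_pos h1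
      have h3 : D (j - 1) / D j - 1 = (K - 1) / D j := by
        rw [hDdiff j hj1]; field_simp; ring
      linarith [h2, h3 ▸ h2]
    have hjle : (j : ℝ) ≤ K - 1 := by
      have := (Nat.cast_le (α := ℝ)).mpr hj2; rw [hcast] at this; exact this
    have hj1' : (1 : ℝ) ≤ (j : ℝ) := by exact_mod_cast hj1
    have hw : 0 < 1 - ((j : ℝ) - 1) / K := by
      rw [sub_pos, div_lt_one hK0]; linarith
    have hle : (1 - ((j : ℝ) - 1) / K) * (1 / c j)
        ≤ (1 - ((j : ℝ) - 1) / K) * ((K - 1) / D j / ω) := by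
      apply mul_le_mul_of_nonneg_left _ (le_of_lt hw)
      rw [hcj]
      exact (div_le_div_iff_of_pos_right hω).mpr hlog
    have hkey : (1 - ((j : ℝ) - 1) / K) * ((K - 1) / D j / ω) < 1 / (K * ω) := by
      have hnum : (K - (j : ℝ) + 1) * (K - 1) = D j - 1 := by
        simp only [hD]; ring
      have e : (1 - ((j : ℝ) - 1) / K) * ((K - 1) / D j / ω)
          = (D j - 1) / (K * D j * ω) := by
        rw [← hnum]; field_simp; ring
      rw [e]
      rw [div_lt_div_iff₀ (by positivity) (by positivity)]
      nlinarith
    linarith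
  -- S < 1/ω
  have hne : (Finset.Icc 1 (k - 1)).Nonempty := by
    refine ⟨1, ?_⟩; rw [Finset.mem_Icc]; omega
  have hSlt : S < 1 / ω := by
    rw [hS]
    calc ∑ j ∈ Finset.Icc 1 (k - 1), (1 - ((j : ℝ) - 1) / K) * (1 / c j)
        < ∑ _j ∈ Finset.Icc 1 (k - 1), 1 / (K * ω) :=
          Finset.sum_lt_sum_of_nonempty hne hterm
      _ = (K - 1) * (1 / (K * ω)) := by
          rw [Finset.sum_const, Nat.card_Icc]
          simp only [Nat.add_sub_cancel, nsmul_eq_mul, hcast]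
      _ < 1 / ω := by
          have h1 : (K - 1) * (1 / (K * ω)) < K * (1 / (K * ω)) :=
            mul_lt_mul_of_pos_right (by linarith)
              (one_div_pos.mpr (mul_pos hK0 hω))
          have h2 : K * (1 / (K * ω)) = 1 / ω := by
            field_simp
          linarith
  have hP : 0 < 1 / ω - S := by linarith
  have hck0 : 0 < ck := by rw [hck]; positivity
  -- split lemma
  have hsplit : ∀ x : ℝ, (∑ j ∈ Finset.range k,
      (1 / (if j + 1 = k then x else c (j + 1))) * (1 - (j : ℝ) / K))
      = S + (1 / x) * (1 / K) := by
    intro x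
    have hkeq : k = (k - 1) + 1 := by omega
    rw [hkeq, Finset.sum_range_succ]
    have hlast : (1 / (if (k - 1) + 1 = (k - 1) + 1 then x else c ((k - 1) + 1))) *
        (1 - ((k - 1 : ℕ) : ℝ) / K) = (1 / x) * (1 / K) := by
      rw [if_pos rfl, hcast]
      have he : (1 : ℝ) - (K - 1) / K = 1 / K := by
        field_simp; ring
      rw [he]
    rw [hlast]
    congr 1
    have hmain : ∀ j ∈ Finset.range (k - 1),
        (1 / (if j + 1 = (k - 1) + 1 then x else c (j + 1))) * (1 - (j : ℝ) / K)
        = (1 - (((j + 1 : ℕ) : ℝ) - 1) / K) * (1 / c (j + 1)) := by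
      intro j hj
      rw [Finset.mem_range] at hj
      rw [if_neg (by omega)]
      push_cast
      ring
    rw [Finset.sum_congr rfl hmain, hS, ← Finset.Ico_add_one_right_eq_Icc,
      Finset.sum_Ico_eq_sum_range]
    apply Finset.sum_congr rfl
    intro j _
    rw [Nat.add_comm 1 j]
  have hckinv : (1 / ck) * (1 / K) = 1 / ω - S := by
    rw [hck, one_div_div]
    field_simp
  refine ⟨hcpos, hSlt, hck0, ?_, ?_⟩
  · rw [hsplit ck, hckinv]; ring
  · intro x hx hsum
    rw [hsplit x] at hsum
    have hx0 : x ≠ 0 := ne_of_gt hx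
    have hxinv : 1 / x = (1 / ω - S) * K := by
      have : (1 / x) * (1 / K) = 1 / ω - S := by linarith
      field_simp at this ⊢
      linarith
    have hckinv' : 1 / ck = (1 / ω - S) * K := by
      have := hckinv
      field_simp at this ⊢
      linarith
    have : 1 / x = 1 / ck := by rw [hxinv, hckinv']
    field_simp at this
    linarith
end

section
/- Consider the SIR⁽ᵏ⁾S model without vaccination and assume R₀ ≤ 1. If t ↦ (s(t), i(t), r₀(t), …, r_{k−1}(t)) is a differentiable solution of the SIR⁽ᵏ⁾S differential equations on [0, ∞) whose components are nonnegative and sum to 1 at every time t, then i(t) ≤ i(0)·exp((γ+μ)·(R₀ − 1)·t) for all t ≥ 0; in particular i is nonincreasing. -/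
/-- If R₀ = β/(γ+μ) ≤ 1, every differentiable nonnegative solution of the SIR⁽ᵏ⁾S
differential equations on [0,∞) whose components sum to 1 satisfies
i(t) ≤ i(0)·exp((γ+μ)(R₀−1)t) for all t ≥ 0; in particular i is nonincreasing on [0,∞). -/
theorem sirks_no_epidemic_when_R0_le_one
    (k : ℕ) (hk : 2 ≤ k) (β γ μ : ℝ) (hβ : 0 < β) (hγ : 0 < γ) (hμ : 0 < μ)
    (c : ℕ → ℝ) (hc : ∀ j, 1 ≤ j → j ≤ k → 0 < c j)
    (s i : ℝ → ℝ) (r : ℕ → ℝ → ℝ)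
    (hs : ∀ t ∈ Set.Ici (0 : ℝ), HasDerivWithinAt s
      (μ - β * s t * i t + c k * r (k - 1) t - μ * s t) (Set.Ici 0) t)
    (hi : ∀ t ∈ Set.Ici (0 : ℝ), HasDerivWithinAt i
      (β * s t * i t +
        β * (∑ j ∈ Finset.Icc 1 (k - 1), ((j : ℝ) / (k : ℝ)) * r j t) * i t -
        (γ + μ) * i t) (Set.Ici 0) t)
    (hr0 : ∀ t ∈ Set.Ici (0 : ℝ), HasDerivWithinAt (r 0)
      (γ * i t - (c 1 + μ) * r 0 t) (Set.Ici 0) t)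
    (hrj : ∀ j, 1 ≤ j → j ≤ k - 1 → ∀ t ∈ Set.Ici (0 : ℝ), HasDerivWithinAt (r j)
      (c j * r (j - 1) t - β * ((j : ℝ) / (k : ℝ)) * r j t * i t -
        (c (j + 1) + μ) * r j t) (Set.Ici 0) t)
    (hnonneg : ∀ t ∈ Set.Ici (0 : ℝ),
      0 ≤ s t ∧ 0 ≤ i t ∧ ∀ j ≤ k - 1, 0 ≤ r j t)
    (hsum : ∀ t ∈ Set.Ici (0 : ℝ), s t + i t + ∑ j ∈ Finset.range k, r j t = 1)
    (hR0 : β / (γ + μ) ≤ 1) :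
    (∀ t ∈ Set.Ici (0 : ℝ),
      i t ≤ i 0 * Real.exp ((γ + μ) * (β / (γ + μ) - 1) * t)) ∧
    AntitoneOn i (Set.Ici 0) := by
  have hγμ : (0:ℝ) < γ + μ := by positivity
  set a : ℝ := β - (γ + μ) with ha
  have haeq : (γ + μ) * (β / (γ + μ) - 1) = a := by
    field_simp [ha]
    linarith
  have ha0 : a ≤ 0 := by
    have : β ≤ γ + μ := (div_le_one hγμ).mp hR0
    simp [ha]; linarith
  -- key derivative bound
  have key : ∀ t ∈ Set.Ici (0:ℝ),
      β * s t * i t +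
        β * (∑ j ∈ Finset.Icc 1 (k - 1), ((j : ℝ) / (k : ℝ)) * r j t) * i t -
        (γ + μ) * i t ≤ a * i t := by
    intro t ht
    obtain ⟨hs0, hi0, hr⟩ := hnonneg t ht
    have hsum' := hsum t ht
    have h1 : ∑ j ∈ Finset.Icc 1 (k - 1), ((j : ℝ) / (k : ℝ)) * r j t
        ≤ ∑ j ∈ Finset.Icc 1 (k - 1), r j t := by
      refine Finset.sum_le_sum fun j hj => ?_
      obtain ⟨hj1, hj2⟩ := Finset.mem_Icc.mp hj
      have hrj0 : 0 ≤ r j t := hr j hj2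
      have hjk : (j : ℝ) / (k : ℝ) ≤ 1 := by
        rw [div_le_one (by positivity)]
        exact_mod_cast le_trans hj2 (Nat.sub_le k 1)
      nlinarith
    have h2 : ∑ j ∈ Finset.Icc 1 (k - 1), r j t ≤ ∑ j ∈ Finset.range k, r j t := by
      refine Finset.sum_le_sum_of_subset_of_nonneg ?_ ?_
      · intro j hj
        obtain ⟨hj1, hj2⟩ := Finset.mem_Icc.mp hj
        exact Finset.mem_range.mpr (lt_of_le_of_lt hj2 (Nat.sub_lt (by omega) one_pos))
      · intro j hj _
        exact hr j (Nat.le_sub_one_of_lt (Finset.mem_range.mp hj))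
    have hS : s t + (∑ j ∈ Finset.Icc 1 (k - 1), ((j : ℝ) / (k : ℝ)) * r j t) ≤ 1 := by
      linarith
    have := mul_le_mul_of_nonneg_right
      (mul_le_mul_of_nonneg_left hS (le_of_lt hβ)) hi0
    simp [ha]; nlinarith
  -- auxiliary function g t = i t * exp (-a * t)
  set g : ℝ → ℝ := fun t => i t * Real.exp (-a * t) with hg
  have hexp : ∀ t : ℝ, HasDerivAt (fun u => Real.exp (-a * u))
      (-a * Real.exp (-a * t)) t := by
    intro t
    have h := ((hasDerivAt_id t).const_mul (-a)).exp
    simpa [mul_comm] using h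
  have hgderiv : ∀ t ∈ Set.Ici (0:ℝ), HasDerivWithinAt g
      ((β * s t * i t +
        β * (∑ j ∈ Finset.Icc 1 (k - 1), ((j : ℝ) / (k : ℝ)) * r j t) * i t -
        (γ + μ) * i t) * Real.exp (-a * t) + i t * (-a * Real.exp (-a * t)))
      (Set.Ici 0) t := by
    intro t ht
    exact (hi t ht).mul ((hexp t).hasDerivWithinAt)
  have hgderiv_nonpos : ∀ t ∈ Set.Ici (0:ℝ),
      (β * s t * i t +
        β * (∑ j ∈ Finset.Icc 1 (k - 1), ((j : ℝ) / (k : ℝ)) * r j t) * i t -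
        (γ + μ) * i t) * Real.exp (-a * t) + i t * (-a * Real.exp (-a * t)) ≤ 0 := by
    intro t ht
    have hk := key t ht
    have hE : 0 < Real.exp (-a * t) := Real.exp_pos _
    nlinarith
  have hganti : AntitoneOn g (Set.Ici 0) := by
    apply antitoneOn_of_deriv_nonpos (convex_Ici 0)
    · intro t ht
      exact (hgderiv t ht).continuousWithinAt
    · intro t ht
      rw [interior_Ici] at ht
      exact ((hgderiv t (Set.Ioi_subset_Ici_self ht)).hasDerivAt (Ici_mem_nhds ht)).differentiableAt.differentiableWithinAt
    · intro t ht
      rw [interior_Ici] at ht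
      have hd := (hgderiv t (Set.Ioi_subset_Ici_self ht)).hasDerivAt (Ici_mem_nhds ht)
      rw [hd.deriv]
      exact hgderiv_nonpos t (Set.Ioi_subset_Ici_self ht)
  have hianti : AntitoneOn i (Set.Ici 0) := by
    apply antitoneOn_of_deriv_nonpos (convex_Ici 0)
    · intro t ht
      exact (hi t ht).continuousWithinAt
    · intro t ht
      rw [interior_Ici] at ht
      exact ((hi t (Set.Ioi_subset_Ici_self ht)).hasDerivAt (Ici_mem_nhds ht)).differentiableAt.differentiableWithinAt
    · intro t ht
      rw [interior_Ici] at ht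
      have hd := (hi t (Set.Ioi_subset_Ici_self ht)).hasDerivAt (Ici_mem_nhds ht)
      rw [hd.deriv]
      have hk := key t (Set.Ioi_subset_Ici_self ht)
      have hi0 := (hnonneg t (Set.Ioi_subset_Ici_self ht)).2.1
      nlinarith
  refine ⟨fun t ht => ?_, hianti⟩
  have hgle : g t ≤ g 0 := hganti (le_refl (0:ℝ)) ht ht
  have hE : 0 < Real.exp (-a * t) := Real.exp_pos _
  have hg0 : g 0 = i 0 := by simp [hg]
  rw [haeq]
  have : i t * Real.exp (-a * t) ≤ i 0 := by rw [← hg0]; exact hgle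
  calc i t = i t * Real.exp (-a * t) * Real.exp (a * t) := by
        rw [mul_assoc, ← Real.exp_add]; simp
    _ ≤ i 0 * Real.exp (a * t) :=
        mul_le_mul_of_nonneg_right this (Real.exp_pos (a * t)).le
end

section
/- Consider the SIR⁽ᵏ⁾S model without vaccination. Every stationary state (s̄, ī, r̄₀, …, r̄_{k−1}) with ī > 0 satisfies s̄ + ∑_{j=1}^{k−1} (j/k)·r̄_j = 1/R₀; consequently, if R₀ ≤ 1 there is no stationary state with positive fraction of infectives, i.e. no endemic equilibrium exists. -/
/-- A stationary state of the SIR⁽ᵏ⁾S model: nonnegative entries summing to 1,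
satisfying the stationarity equations. -/
def IsStationarySIRkS (k : ℕ) (β γ μ : ℝ) (c : ℕ → ℝ) (s i : ℝ) (r : ℕ → ℝ) : Prop :=
  0 ≤ s ∧ 0 ≤ i ∧ (∀ j ≤ k - 1, 0 ≤ r j) ∧
  s + i + ∑ j ∈ Finset.range k, r j = 1 ∧
  μ - β * s * i + c k * r (k - 1) - μ * s = 0 ∧
  β * s * i + β * (∑ j ∈ Finset.Icc 1 (k - 1), ((j : ℝ) / (k : ℝ)) * r j) * i -
    (γ + μ) * i = 0 ∧
  γ * i - (c 1 + μ) * r 0 = 0 ∧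
  ∀ j, 1 ≤ j → j ≤ k - 1 →
    c j * r (j - 1) - β * ((j : ℝ) / (k : ℝ)) * r j * i - (c (j + 1) + μ) * r j = 0

/-!
The infective equation reads `(β · σ − (γ + μ)) · i = 0` for the effective susceptibility
`σ = s + ∑ (j/k) r_j`, so an endemic state has `σ = (γ + μ)/β = 1/R₀`. Since each weight
`j/k` is at most `1`, `σ ≤ s + ∑ r_j = 1 − i < 1`, which forces `R₀ > 1`.
-/

open Finset

noncomputable def effectiveSusceptibility (k : ℕ) (s : ℝ) (r : ℕ → ℝ) : ℝ :=
  s + ∑ j ∈ Icc 1 (k - 1), ((j : ℝ) / (k : ℝ)) * r j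

lemma sum_Icc_div_mul_le_sum_range (k : ℕ) (r : ℕ → ℝ) (hr : ∀ j ≤ k - 1, 0 ≤ r j) :
    ∑ j ∈ Icc 1 (k - 1), ((j : ℝ) / (k : ℝ)) * r j ≤ ∑ j ∈ range k, r j := by
  calc ∑ j ∈ Icc 1 (k - 1), ((j : ℝ) / (k : ℝ)) * r j
      ≤ ∑ j ∈ Icc 1 (k - 1), r j := by
        refine sum_le_sum fun j hj => ?_
        have hjk : j ≤ k - 1 := (mem_Icc.mp hj).2
        have hweight : (j : ℝ) / (k : ℝ) ≤ 1 :=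
          div_le_one_of_le₀ (by exact_mod_cast hjk.trans (Nat.sub_le k 1)) (Nat.cast_nonneg k)
        exact mul_le_of_le_one_left (hr j hjk) hweight
    _ ≤ ∑ j ∈ range k, r j :=
        sum_le_sum_of_subset_of_nonneg
          (fun j hj => by simp only [mem_Icc, mem_range] at hj ⊢; omega)
          (fun j hj _ => hr j (by simp only [mem_range] at hj; omega))

namespace IsStationarySIRkS

variable {k : ℕ} {β γ μ : ℝ} {c : ℕ → ℝ} {s i : ℝ} {r : ℕ → ℝ}

lemma effectiveSusceptibility_eq (hst : IsStationarySIRkS k β γ μ c s i r) (hβ : β ≠ 0)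
    (hi : 0 < i) : effectiveSusceptibility k s r = (γ + μ) / β := by
  have hinfective := hst.2.2.2.2.2.1
  have hfactor : (β * effectiveSusceptibility k s r - (γ + μ)) * i = 0 := by
    rw [effectiveSusceptibility]; linear_combination hinfective
  have hbalance := (mul_eq_zero.mp hfactor).resolve_right hi.ne'
  rw [eq_div_iff hβ]
  linear_combination hbalance

lemma effectiveSusceptibility_lt_one (hst : IsStationarySIRkS k β γ μ c s i r) (hi : 0 < i) :
    effectiveSusceptibility k s r < 1 := by
  obtain ⟨-, -, hr, htotal, -⟩ := hst
  have := sum_Icc_div_mul_le_sum_range k r hr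
  rw [effectiveSusceptibility]
  linarith

end IsStationarySIRkS

theorem sirks_endemic_effective_susceptibility_general
    (k : ℕ) (β γ μ : ℝ) (hβ : 0 < β) (hγ : 0 < γ) (hμ : 0 < μ)
    (c : ℕ → ℝ) :
    (∀ (s i : ℝ) (r : ℕ → ℝ), IsStationarySIRkS k β γ μ c s i r → 0 < i →
      s + ∑ j ∈ Finset.Icc 1 (k - 1), ((j : ℝ) / (k : ℝ)) * r j =
        1 / (β / (γ + μ))) ∧
    (β / (γ + μ) ≤ 1 →
      ¬ ∃ (s i : ℝ) (r : ℕ → ℝ), IsStationarySIRkS k β γ μ c s i r ∧ 0 < i) := by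
  refine ⟨fun s i r hst hi => ?_, ?_⟩
  · rw [one_div_div]
    exact hst.effectiveSusceptibility_eq hβ.ne' hi
  · rintro hR₀ ⟨s, i, r, hst, hi⟩
    have hσ := hst.effectiveSusceptibility_lt_one hi
    rw [hst.effectiveSusceptibility_eq hβ.ne' hi, div_lt_one hβ] at hσ
    rw [div_le_one (by linarith)] at hR₀
    linarith

/-- Every stationary state of the SIR⁽ᵏ⁾S model with ī > 0 satisfies
s̄ + ∑_{j=1}^{k−1} (j/k)·r̄_j = 1/R₀ with R₀ = β/(γ+μ); consequently, if R₀ ≤ 1 there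
is no endemic equilibrium. -/
theorem sirks_endemic_effective_susceptibility
    (k : ℕ) (hk : 2 ≤ k) (β γ μ : ℝ) (hβ : 0 < β) (hγ : 0 < γ) (hμ : 0 < μ)
    (c : ℕ → ℝ) (hc : ∀ j, 1 ≤ j → j ≤ k → 0 < c j) :
    (∀ (s i : ℝ) (r : ℕ → ℝ), IsStationarySIRkS k β γ μ c s i r → 0 < i →
      s + ∑ j ∈ Finset.Icc 1 (k - 1), ((j : ℝ) / (k : ℝ)) * r j =
        1 / (β / (γ + μ))) ∧
    (β / (γ + μ) ≤ 1 →
      ¬ ∃ (s i : ℝ) (r : ℕ → ℝ), IsStationarySIRkS k β γ μ c s i r ∧ 0 < i) :=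
  sirks_endemic_effective_susceptibility_general k β γ μ hβ hγ hμ c
end
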